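/- arXiv:1106.4595 — 3 statements merged into one kernel-verified Lean document; each statement's English description precedes it below -/
import Mathlib

section
/- Let G₁ and G₂ be nontrivial groups that are not both cyclic of order 2 (i.e., it is not the case that both G₁ and G₂ have exactly two elements). Then the free product G₁ * G₂ is normally insoluble: every solvable normal subgroup of G₁ * G₂ is trivial. -/
/-!
If `H` is solvable and normal, the last nontrivial term of its derived series is an abelian normal
subgroup of `G₁ ∗ G₂`, so it suffices to show that an abelian normal subgroup `A` is trivial.
By cyclic reduction, a nontrivial normal subgroup contains a reduced word `w` whose first and last
letters lie in different factors, and we may take the first letter in a factor with at least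
three elements. For a suitable `g`, the reduced forms of `w * (g * w * g⁻¹)` and
`(g * w * g⁻¹) * w` have different lengths, so `w` and its conjugate do not commute.
-/

theorem exists_ne_and_ne_of_natCard_ne_two {α : Type*} [Nontrivial α] (h : Nat.card α ≠ 2)
    (x y : α) : ∃ z, z ≠ x ∧ z ≠ y := by
  rcases eq_or_ne x y with rfl | hxy
  · simpa using exists_ne x
  · by_contra! hc
    exact h (Nat.card_eq_two_iff.mpr ⟨x, y, hxy, Set.eq_univ_of_forall fun z => by
      simpa using (eq_or_ne z x).imp_right (hc z)⟩)

namespace Subgroup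

theorem eq_bot_of_isSolvable {G : Type*} [Group G]
    (hG : ∀ A : Subgroup G, A.Normal → ⁅A, A⁆ = ⊥ → A = ⊥)
    {H : Subgroup G} (hH : H.Normal) [Group.IsSolvable H] : H = ⊥ := by
  let K (m : ℕ) : Subgroup G := (derivedSeries H m).map H.subtype
  have hK_zero : K 0 = H := by simp [K, ← MonoidHom.range_eq_map]
  have hK_succ (m : ℕ) : K (m + 1) = ⁅K m, K m⁆ := by
    simp only [K, derivedSeries_succ, map_commutator]
  have hK_normal (m : ℕ) : (K m).Normal := by
    induction m with
    | zero => rwa [hK_zero]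
    | succ m ih => rw [hK_succ]; exact commutator_normal _ _
  have hK_bot (m : ℕ) : K m = ⊥ → H = ⊥ := by
    induction m with
    | zero => rw [hK_zero]; exact id
    | succ m ih => exact fun h => ih (hG _ (hK_normal m) (hK_succ m ▸ h))
  obtain ⟨n, hn⟩ := Group.IsSolvable.solvable (G := H)
  exact hK_bot n (by simp [K, hn])

end Subgroup

namespace Monoid.CoprodI.NeWord

variable {ι : Type*} {M : ι → Type*} [∀ i, Monoid (M i)]

theorem head_ne_one {i j : ι} (w : NeWord M i j) : w.head ≠ 1 := by
  induction w <;> simp_all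

theorem last_ne_one {i j : ι} (w : NeWord M i j) : w.last ≠ 1 := by
  induction w <;> simp_all

theorem length_toList_replaceHead {i j : ι} (x : M i) (hx : x ≠ 1) (w : NeWord M i j) :
    (w.replaceHead x hx).toList.length = w.toList.length := by
  induction w with
  | singleton => rfl
  | append w₁ hne w₂ ih₁ => simp [replaceHead, ih₁]

theorem length_toList_mulHead {i j : ι} (w : NeWord M i j) (x : M i) (hx : x * w.head ≠ 1) :
    (w.mulHead x hx).toList.length = w.toList.length :=
  length_toList_replaceHead _ _ _

theorem toList_eq_of_prod_eq {i j k l : ι} {w₁ : NeWord M i j} {w₂ : NeWord M k l}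
    (h : w₁.prod = w₂.prod) : w₁.toList = w₂.toList := by
  classical
  exact congrArg Word.toList (Word.equiv.symm.injective h)

theorem singleton_or_exists_tail {i j : ι} (w : NeWord M i j) :
    (i = j ∧ w.prod = of w.head) ∨ ∃ k, i ≠ k ∧ ∃ w' : NeWord M k j,
      w.prod = of w.head * w'.prod ∧ w'.toList.length < w.toList.length := by
  induction w with
  | singleton x hx => exact .inl ⟨rfl, by simp⟩
  | @append i j₁ k₂ j w₁ hne w₂ ih₁ =>
    rcases ih₁ with ⟨rfl, hprod⟩ | ⟨k, hik, w', hprod, hlen⟩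
    · refine .inr ⟨k₂, hne, w₂, by simp [append_prod, hprod], ?_⟩
      have := List.length_pos_of_ne_nil w₁.toList_ne_nil
      simp only [toList, List.length_append]; omega
    · refine .inr ⟨k, hik, w'.append hne w₂, by simp [append_prod, hprod, mul_assoc], ?_⟩
      simp only [toList, List.length_append]; omega

theorem singleton_or_exists_init {i j : ι} (w : NeWord M i j) :
    (i = j ∧ w.prod = of w.last) ∨ ∃ k, k ≠ j ∧ ∃ w' : NeWord M i k,
      w.prod = w'.prod * of w.last ∧ w'.toList.length < w.toList.length := by
  induction w with
  | singleton x hx => exact .inl ⟨rfl, by simp⟩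
  | @append i j₁ k₂ j w₁ hne w₂ _ ih₂ =>
    rcases ih₂ with ⟨rfl, hprod⟩ | ⟨k, hkj, w', hprod, hlen⟩
    · refine .inr ⟨j₁, hne, w₁, by simp [append_prod, hprod], ?_⟩
      have := List.length_pos_of_ne_nil w₂.toList_ne_nil
      simp only [toList, List.length_append]; omega
    · refine .inr ⟨k, hkj, w₁.append hne w', by simp [append_prod, hprod, mul_assoc], ?_⟩
      simp only [toList, List.length_append]; omega

end Monoid.CoprodI.NeWord

namespace Monoid.CoprodI

theorem exists_neWord_prod_eq {ι : Type*} {M : ι → Type*} [∀ i, Monoid (M i)] {x : CoprodI M}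
    (hx : x ≠ 1) : ∃ i j, ∃ w : NeWord M i j, w.prod = x := by
  classical
  have hx' : (Word.equiv x).prod = x := Word.equiv.symm_apply_apply x
  obtain ⟨i, j, w, hw⟩ := NeWord.of_word (Word.equiv x) fun h => hx (by
    rw [← hx', h, Word.prod_empty])
  exact ⟨i, j, w, by rw [NeWord.prod, hw, hx']⟩

section

variable {ι : Type*} {G : ι → Type*} [∀ i, Group (G i)] {N : Subgroup (CoprodI G)}

theorem exists_of_mem_or_exists_neWord_mem (hN : N.Normal) {i j : ι} (w : NeWord G i j)
    (hw : w.prod ∈ N) :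
    (∃ k, ∃ c : G k, c ≠ 1 ∧ of c ∈ N) ∨ ∃ k l, k ≠ l ∧ ∃ v : NeWord G k l, v.prod ∈ N := by
  induction hn : w.toList.length using Nat.strong_induction_on generalizing i j with
  | _ n ih =>
  rcases eq_or_ne i j with rfl | hij
  swap; · exact .inr ⟨i, j, hij, w, hw⟩
  rcases w.singleton_or_exists_tail with ⟨-, hprod⟩ | ⟨k, hik, w', hprod, hlen⟩
  · exact .inl ⟨i, w.head, w.head_ne_one, hprod ▸ hw⟩
  rcases w'.singleton_or_exists_init with ⟨rfl, -⟩ | ⟨m, hmi, w'', hprod', hlen'⟩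
  · exact absurd rfl hik
  -- conjugating by the head letter moves it next to the last letter
  have hconj : w''.prod * of (w'.last * w.head) ∈ N := by
    simpa [hprod, hprod', mul_assoc] using hN.conj_mem _ hw (of w.head)⁻¹
  by_cases hcancel : w'.last * w.head = 1
  · rw [hcancel, map_one, mul_one] at hconj
    exact ih _ (by omega) w'' hconj rfl
  · exact .inr ⟨k, i, hik.symm, w''.append hmi (.singleton _ hcancel),
      by simpa [NeWord.append_prod] using hconj⟩

theorem exists_neWord_prod_mem_of_of_mem (hN : N.Normal) {i j : ι} (hij : i ≠ j) {c : G i}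
    (hc : c ≠ 1) (hcN : of c ∈ N) {b : G j} (hb : b ≠ 1) : ∃ w : NeWord G i j, w.prod ∈ N := by
  refine ⟨.append (.append (.append (.singleton c hc) hij (.singleton b hb)) hij.symm
    (.singleton c⁻¹ (inv_ne_one.mpr hc))) hij (.singleton b⁻¹ (inv_ne_one.mpr hb)), ?_⟩
  have : of b * (of c)⁻¹ * (of b)⁻¹ ∈ N := hN.conj_mem _ (inv_mem hcN) _
  simpa [NeWord.append_prod, mul_assoc] using mul_mem hcN this

theorem NeWord.prod_notMem_of_commutator_eq_bot (hN : N.Normal) (hNN : ⁅N, N⁆ = ⊥) {i j : ι}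
    (hij : i ≠ j) (hcard : Nat.card (G i) ≠ 2) (w : NeWord G i j) : w.prod ∉ N := by
  intro hw
  have : Nontrivial (G i) := nontrivial_of_ne _ _ w.head_ne_one
  obtain ⟨s, hsw, hs⟩ := exists_ne_and_ne_of_natCard_ne_two hcard w.head 1
  obtain ⟨v, hvw, hv⟩ := exists_ne_and_ne_of_natCard_ne_two hcard w.head⁻¹ 1
  -- `s` and `v` avoid the values that would cancel against `w.head`; this is where `|G i| ≥ 3`
  -- is needed.
  let g := of s * of w.last * of v
  have hcomm : w.prod * (g * w.prod * g⁻¹) = g * w.prod * g⁻¹ * w.prod :=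
    Subgroup.mem_centralizer_iff.mp
      (Subgroup.commutator_eq_bot_iff_le_centralizer.mp hNN (hN.conj_mem _ hw g)) _ hw
  let W : NeWord G i j := .append (.singleton s hs) hij (.append (.singleton w.last w.last_ne_one)
    hij.symm (.append (w.mulHead v fun h => hvw (eq_inv_of_mul_eq_one_left h)) hij.symm
      (.append (.singleton v⁻¹ (inv_ne_one.mpr hv)) hij
        (.singleton w.last⁻¹ (inv_ne_one.mpr w.last_ne_one)))))
  have hW : W.prod = g * w.prod * g⁻¹ * of s := by
    simp [W, g, NeWord.append_prod, NeWord.mulHead_prod, mul_assoc]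
  let Z₁ : NeWord G i i := .append (.append w hij.symm W) hij.symm
    (.singleton s⁻¹ (inv_ne_one.mpr hs))
  let Z₂ : NeWord G i j := .append W hij.symm (w.mulHead s⁻¹ fun h => hsw (inv_mul_eq_one.mp h))
  have hZ : Z₁.prod = Z₂.prod := by
    simp only [Z₁, Z₂, NeWord.append_prod, NeWord.prod_singleton, NeWord.mulHead_prod, hW, map_inv]
    simpa [mul_assoc] using hcomm
  -- `Z₁` has length `2|w| + 5`; in `Z₂` the letters `s⁻¹` and `w.head` merge, giving `2|w| + 4`.
  have := congrArg List.length (NeWord.toList_eq_of_prod_eq hZ)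
  simp only [Z₁, Z₂, W, NeWord.toList, List.length_append, List.length_cons, List.length_nil,
    NeWord.length_toList_mulHead] at this
  omega

end

section

variable {G : Bool → Type*} [∀ b, Group (G b)] [∀ b, Nontrivial (G b)]

theorem exists_neWord_prod_mem {N : Subgroup (CoprodI G)} (hN : N.Normal) (hN' : N ≠ ⊥)
    {i j : Bool} (hij : i ≠ j) : ∃ w : NeWord G i j, w.prod ∈ N := by
  obtain ⟨x, hxN, hx⟩ := (Subgroup.bot_or_exists_ne_one N).resolve_left hN'
  obtain ⟨k, l, w, rfl⟩ := exists_neWord_prod_eq hx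
  obtain ⟨k, l, hkl, v, hv⟩ : ∃ k l, k ≠ l ∧ ∃ v : NeWord G k l, v.prod ∈ N := by
    rcases exists_of_mem_or_exists_neWord_mem hN w hxN with ⟨k, c, hc, hcN⟩ | h
    · obtain ⟨b, hb⟩ := exists_ne (1 : G !k)
      exact ⟨k, !k, by simp, exists_neWord_prod_mem_of_of_mem hN (by simp) hc hcN hb⟩
    · exact h
  have hpairs : ∀ i j k l : Bool, i ≠ j → k ≠ l → (i = k ∧ j = l) ∨ (i = l ∧ j = k) := by decide
  obtain ⟨rfl, rfl⟩ | ⟨rfl, rfl⟩ := hpairs i j k l hij hkl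
  · exact ⟨v, hv⟩
  · exact ⟨v.inv, by simpa [NeWord.inv_prod] using inv_mem hv⟩

theorem eq_bot_of_commutator_eq_bot (hcard : ∃ b, Nat.card (G b) ≠ 2) {N : Subgroup (CoprodI G)}
    (hN : N.Normal) (hNN : ⁅N, N⁆ = ⊥) : N = ⊥ := by
  by_contra hN'
  obtain ⟨b, hb⟩ := hcard
  obtain ⟨w, hw⟩ := exists_neWord_prod_mem hN hN' (Bool.not_ne_self b).symm
  exact NeWord.prod_notMem_of_commutator_eq_bot hN hNN (Bool.not_ne_self b).symm hb w hw

end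

end Monoid.CoprodI

namespace Monoid.Coprod

universe u v

variable (G₁ : Type u) (G₂ : Type v) [Group G₁] [Group G₂]

def Factor : Bool → Type max u v
  | true => ULift.{v} G₁
  | false => ULift.{u} G₂

instance : ∀ b, Group (Factor G₁ G₂ b)
  | true => inferInstanceAs (Group (ULift G₁))
  | false => inferInstanceAs (Group (ULift G₂))

instance [Nontrivial G₁] [Nontrivial G₂] : ∀ b, Nontrivial (Factor G₁ G₂ b)
  | true => inferInstanceAs (Nontrivial (ULift G₁))
  | false => inferInstanceAs (Nontrivial (ULift G₂))

noncomputable def mulEquivCoprodI : G₁ ∗ G₂ ≃* CoprodI (Factor G₁ G₂) :=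
  MonoidHom.toMulEquiv
    (Coprod.lift ((CoprodI.of (i := true)).comp MulEquiv.ulift.symm.toMonoidHom)
      ((CoprodI.of (i := false)).comp MulEquiv.ulift.symm.toMonoidHom))
    (CoprodI.lift fun
      | true => Coprod.inl.comp MulEquiv.ulift.toMonoidHom
      | false => Coprod.inr.comp MulEquiv.ulift.toMonoidHom)
    (by ext <;> rfl)
    (by ext (_ | _) <;> rfl)

end Monoid.Coprod

open Monoid.Coprod in
/-- A nontrivial free product `G₁ ∗ G₂` (with `G₁`, `G₂` not both cyclic of
order `2`) is normally insoluble: every solvable normal subgroup is trivial. -/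
theorem free_product_normally_insoluble {G₁ G₂ : Type*} [Group G₁] [Group G₂]
    [Nontrivial G₁] [Nontrivial G₂]
    (hnot22 : ¬(Nat.card G₁ = 2 ∧ Nat.card G₂ = 2))
    (H : Subgroup (Monoid.Coprod G₁ G₂)) (hH : H.Normal) (hsolv : IsSolvable ↥H) :
    H = ⊥ := by
  have hcard : ∃ b, Nat.card (Factor G₁ G₂ b) ≠ 2 := by
    by_contra! h
    exact hnot22 ⟨(Nat.card_ulift G₁).symm.trans (h true),
      (Nat.card_ulift G₂).symm.trans (h false)⟩
  have : Group.IsSolvable H := hsolv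
  refine Subgroup.eq_bot_of_isSolvable (fun A hA hAA => ?_) hH
  let e := mulEquivCoprodI G₁ G₂
  rw [← Subgroup.map_eq_bot_iff_of_injective A e.injective]
  refine Monoid.CoprodI.eq_bot_of_commutator_eq_bot hcard (hA.map _ e.surjective) ?_
  rw [← Subgroup.map_commutator, hAA, Subgroup.map_bot]
end

section
/- Every finitely generated nontrivial normal subgroup of a free group has finite index: if F is a free group and N is a normal subgroup of F that is finitely generated and not the trivial subgroup, then N has finite index in F. -/
/-!
Let `N = ⟨S⟩` with `S` finite and let `D` be the finite set of elements spelled by suffixes of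
the reduced words of `1` and of `S ∪ S⁻¹`. Writing an element of `N` as a product of generators
shows that every suffix of its reduced word lies in `D N`. Now pick a nontrivial cyclically
reduced `u ∈ N`. For any `g`, one of `v = u` or `v = u⁻¹` is multiplied by `g` without
cancellation, so in `g⁻¹ v g ∈ N` either the whole word of `g` survives as a suffix, giving
`g ∈ D N`, or the word of `v` is a prefix of that of `g`, and `g = v h ∈ h N` with `h` shorter.
By induction on length `D` meets every coset of `N`.
-/

namespace FreeGroup

variable {α : Type*}

theorem isReduced_append_iff {A B : List (α × Bool)} :
    IsReduced (A ++ B) ↔ IsReduced A ∧ IsReduced B ∧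
      ∀ a ∈ A.getLast?, ∀ b ∈ B.head?, a.1 = b.1 → a.2 = b.2 :=
  List.isChain_append

variable [DecidableEq α]

theorem IsReduced.exists_reduce_append {A B : List (α × Bool)} (hA : IsReduced A)
    (hB : IsReduced B) :
    ∃ A' B' C, A = A' ++ C ∧ B = invRev C ++ B' ∧ reduce (A ++ B) = A' ++ B' := by
  induction B generalizing A with
  | nil => exact ⟨A, [], [], by simp, by simp [invRev], by simpa using hA.reduce_eq⟩
  | cons b B ih =>
    obtain rfl | ⟨A, a, rfl⟩ := A.eq_nil_or_concat
    · exact ⟨[], b :: B, [], rfl, by simp [invRev], by simpa using hB.reduce_eq⟩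
    rw [List.concat_eq_append] at hA ⊢
    by_cases hab : b = (a.1, !a.2)
    · obtain ⟨A', B', C, rfl, rfl, hred⟩ :=
        ih (hA.infix ⟨[], [a], rfl⟩) (hB.infix ⟨[b], [], by simp⟩)
      refine ⟨A', B', C ++ [a], by simp, by simp [invRev, hab], ?_⟩
      have hcancel : A' ++ C ++ [a] ++ b :: (invRev C ++ B') =
          A' ++ C ++ (a.1, a.2) :: (a.1, !a.2) :: (invRev C ++ B') := by simp [hab]
      rw [hcancel, reduce.Step.eq Red.Step.not, hred]
    · refine ⟨A ++ [a], b :: B, [], by simp, by simp [invRev], IsReduced.reduce_eq ?_⟩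
      refine isReduced_append_iff.mpr ⟨hA, hB, ?_⟩
      simp only [List.getLast?_append, List.getLast?_singleton, Option.some_or,
        Option.mem_def, Option.some.injEq, List.head?_cons, forall_eq']
      intro h1
      contrapose! hab
      exact Prod.ext h1.symm (Bool.eq_not_iff.mpr (Ne.symm hab))

theorem mk_eq_mk_mul_of_toWord_eq {x : FreeGroup α} {C B' : List (α × Bool)}
    (h : x.toWord = invRev C ++ B') : mk B' = mk C * x := by
  rw [← mk_toWord (x := x), h, ← mul_mk, ← inv_mk, mul_inv_cancel_left]

theorem suffix_toWord_mul {x y : FreeGroup α} {s : List (α × Bool)}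
    (hs : s <:+ (x * y).toWord) :
    s <:+ y.toWord ∨ ∃ s₁, s₁ <:+ x.toWord ∧ mk s = mk s₁ * y := by
  obtain ⟨A', B', C, hx, hy, hred⟩ :=
    (isReduced_toWord (x := x)).exists_reduce_append (isReduced_toWord (x := y))
  rw [toWord_mul, hred] at hs
  obtain ⟨r, hr⟩ := hs
  obtain ⟨t, rfl, rfl⟩ | ⟨t, -, rfl⟩ := List.append_eq_append_iff.mp hr
  · right
    refine ⟨t ++ C, ⟨r, by rw [hx, List.append_assoc]⟩, ?_⟩
    rw [← mul_mk, mk_eq_mk_mul_of_toWord_eq hy, ← mul_assoc, mul_mk]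
  · exact Or.inl (hy ▸ (List.suffix_append t s).trans (List.suffix_append _ _))

def suffixSet (T : Set (FreeGroup α)) : Set (FreeGroup α) :=
  ⋃ t ∈ T, mk '' {s | s <:+ t.toWord}

theorem mk_mem_suffixSet {T : Set (FreeGroup α)} {t : FreeGroup α} (ht : t ∈ T)
    {s : List (α × Bool)} (hs : s <:+ t.toWord) : mk s ∈ suffixSet T :=
  Set.mem_biUnion ht ⟨s, hs, rfl⟩

theorem finite_suffixSet {T : Set (FreeGroup α)} (hT : T.Finite) : (suffixSet T).Finite :=
  hT.biUnion fun t _ => by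
    simpa only [← List.mem_tails] using t.toWord.tails.finite_toSet.image mk

theorem mk_mem_image_suffixSet_of_mem_closure {S : Set (FreeGroup α)} {x : FreeGroup α}
    (hx : x ∈ Subgroup.closure S) {s : List (α × Bool)} (hs : s <:+ x.toWord) :
    (mk s : FreeGroup α ⧸ Subgroup.closure S) ∈
      (↑) '' suffixSet (insert 1 (S ∪ S⁻¹)) := by
  induction hx using Subgroup.closure_induction'' generalizing s with
  | mem x hx => exact ⟨mk s, mk_mem_suffixSet (.inr (.inl hx)) hs, rfl⟩
  | inv_mem x hx => exact ⟨mk s, mk_mem_suffixSet (.inr (.inr (by simpa using hx))) hs, rfl⟩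
  | one => exact ⟨mk s, mk_mem_suffixSet (.inl rfl) hs, rfl⟩
  | mul x y _ hy ihx ihy =>
    rcases suffix_toWord_mul hs with hsy | ⟨s₁, hs₁, hmk⟩
    · exact ihy hsy
    · obtain ⟨d, hd, hds₁⟩ := ihx hs₁
      exact ⟨d, hd, by rw [hmk, QuotientGroup.mk_mul_of_mem _ hy, hds₁]⟩

theorem suffix_toWord_conj_or_prefix {v g : FreeGroup α} (h : IsReduced (v.toWord ++ g.toWord)) :
    g.toWord <:+ (g⁻¹ * (v * g)).toWord ∨ v.toWord <+: g.toWord := by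
  obtain ⟨A', B', C, hA, hB, hred⟩ := (isReduced_toWord (x := g⁻¹)).exists_reduce_append h
  rw [toWord_mul, toWord_mul v, h.reduce_eq, hred]
  obtain ⟨t, -, rfl⟩ | ⟨t, hC, -⟩ := List.append_eq_append_iff.mp hB.symm
  · exact Or.inl ((List.suffix_append t _).trans (List.suffix_append _ _))
  · have hg : g.toWord = invRev C ++ invRev A' := by
      rw [← invRev_invRev (L₁ := g.toWord), ← toWord_inv, hA, invRev_append]
    exact Or.inr ⟨t ++ invRev A', by rw [hg, hC, List.append_assoc]⟩

theorem isReduced_toWord_append_or_inv {u : FreeGroup α} (hu : IsCyclicallyReduced u.toWord)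
    (g : FreeGroup α) :
    IsReduced (u.toWord ++ g.toWord) ∨ IsReduced (u⁻¹.toWord ++ g.toWord) := by
  simp only [isReduced_append_iff, isReduced_toWord, true_and]
  -- if both cancel against the first letter `c` of `g`, then `u` starts with `c` and ends
  -- with `c⁻¹`, which cyclic reduction forbids
  by_contra! h
  obtain ⟨⟨a, ha, c, hc, hac, hac'⟩, ⟨b', hb', c', hc', hbc, hbc'⟩⟩ := h
  rw [toWord_inv, invRev, List.getLast?_reverse, List.head?_map] at hb'
  obtain ⟨b, hb, rfl⟩ := Option.mem_map.mp hb'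
  obtain rfl := Option.mem_unique hc hc'
  have hab := hu.2 a ha b hb (hac.trans hbc.symm)
  exact hac' (hab.trans (by simpa using hbc'))

theorem exists_mem_ne_one_isCyclicallyReduced {N : Subgroup (FreeGroup α)} (hN : N.Normal)
    (hne : N ≠ ⊥) : ∃ u ∈ N, u ≠ 1 ∧ IsCyclicallyReduced u.toWord := by
  obtain ⟨⟨x, hx⟩, hx1⟩ := Subgroup.ne_bot_iff_exists_ne_one.mp hne
  set c := mk (reduceCyclically.conjugator x.toWord)
  have hcyc := reduceCyclically.isCyclicallyReduced (isReduced_toWord (x := x))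
  have hconj : x = c * mk (reduceCyclically x.toWord) * c⁻¹ := by
    rw [inv_mk, mul_mk, mul_mk, reduceCyclically.conj_conjugator_reduceCyclically, mk_toWord]
  refine ⟨mk (reduceCyclically x.toWord), ?_, ?_, by rwa [toWord_mk, hcyc.isReduced.reduce_eq]⟩
  · have := hN.conj_mem x hx c⁻¹
    rw [hconj] at this
    simpa [mul_assoc] using this
  · intro h
    rw [h, mul_one, mul_inv_cancel] at hconj
    exact hx1 (Subtype.ext hconj)

theorem surjOn_mk_of_isCyclicallyReduced {N : Subgroup (FreeGroup α)} [N.Normal]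
    {D : Set (FreeGroup α)}
    (hD : ∀ x ∈ N, ∀ s, s <:+ x.toWord → (mk s : FreeGroup α ⧸ N) ∈ (↑) '' D)
    {u : FreeGroup α} (huN : u ∈ N) (hu1 : u ≠ 1) (hu : IsCyclicallyReduced u.toWord) :
    Set.SurjOn ((↑) : FreeGroup α → FreeGroup α ⧸ N) D Set.univ := by
  rintro q -
  obtain ⟨g, rfl⟩ := QuotientGroup.mk_surjective q
  induction hn : norm g using Nat.strong_induction_on generalizing g with
  | _ n ih =>
  obtain ⟨v, hvN, hv1, hvg⟩ : ∃ v ∈ N, v ≠ 1 ∧ IsReduced (v.toWord ++ g.toWord) :=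
    (isReduced_toWord_append_or_inv hu g).elim (⟨u, huN, hu1, ·⟩)
      (⟨u⁻¹, inv_mem huN, inv_ne_one.mpr hu1, ·⟩)
  rcases suffix_toWord_conj_or_prefix hvg with hsuf | ⟨r, hr⟩
  · have hconj : g⁻¹ * (v * g) ∈ N := by
      simpa only [mul_assoc, inv_inv] using Subgroup.Normal.conj_mem ‹_› v hvN g⁻¹
    simpa only [mk_toWord] using hD _ hconj _ hsuf
  · have hg : g = v * mk r := by rw [← mk_toWord (x := v), mul_mk, hr, mk_toWord]
    have hlt : r.length < n := by
      have hv : 0 < v.toWord.length := List.length_pos_iff.mpr (toWord_eq_nil_iff.not.mpr hv1)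
      rw [← hn, norm, ← hr, List.length_append]
      omega
    obtain ⟨d, hd, hdr⟩ := ih _ (norm_mk_le.trans_lt hlt) (mk r) rfl
    refine ⟨d, hd, ?_⟩
    rw [hdr, hg, QuotientGroup.mk_mul, (QuotientGroup.eq_one_iff v).mpr hvN, one_mul]

end FreeGroup

/-- Every finitely generated nontrivial normal subgroup of a free group has
finite index. -/
theorem freeGroup_fg_normal_finiteIndex {α : Type*} (N : Subgroup (FreeGroup α))
    (hnormal : N.Normal) (hfg : N.FG) (hne : N ≠ ⊥) :
    N.FiniteIndex := by
  classical
  obtain ⟨S, rfl⟩ := hfg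
  obtain ⟨u, huN, hu1, hu⟩ := FreeGroup.exists_mem_ne_one_isCyclicallyReduced hnormal hne
  have hsurj := FreeGroup.surjOn_mk_of_isCyclicallyReduced
    (fun _ hx _ hs => FreeGroup.mk_mem_image_suffixSet_of_mem_closure hx hs) huN hu1 hu
  have hfin := FreeGroup.finite_suffixSet ((S.finite_toSet.union S.finite_toSet.inv).insert 1)
  have : Finite (FreeGroup α ⧸ Subgroup.closure (S : Set (FreeGroup α))) :=
    Set.finite_univ_iff.mp (hfin.of_surjOn _ hsurj)
  exact Subgroup.finiteIndex_of_finite_quotient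
end

section
/- Let G be a subgroup of SL(2, ℝ) containing a hyperbolic element, i.e., a matrix γ ∈ G with |trace γ| > 2. Then for every x ∈ G with x ≠ I and x ≠ −I, the normal closure of x in G (the smallest normal subgroup of G containing x) contains an element of infinite order, hence contains an infinite cyclic subgroup. -/
/-!
If `|tr x| ≥ 2` and `x ≠ ±1`, then `x` itself has infinite order: for `|tr x| > 2` the recurrence
`tr xⁿ⁺² = tr x · tr xⁿ⁺¹ - tr xⁿ` makes `|tr xⁿ|` strictly increasing, and for `tr x = ±2` the
matrix `±x` is unipotent, so `(±x)ⁿ = 1 + n (±x - 1)`. If `|tr x| < 2`, the commutator `⁅γ, x⁆`,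
which lies in the normal closure of `x`, is hyperbolic by the Fricke trace identity: writing
`t = tr γ`, `s = tr x`, `u = tr γx`, one has
`4 (tr ⁅γ, x⁆ - 2) = (2u - ts)² + (t² - 4)(4 - s²) > 0`.
-/

open Matrix

theorem one_add_pow_of_mul_self_eq_zero {M : Type*} [Semiring M] {N : M} (hN : N * N = 0)
    (n : ℕ) : (1 + N) ^ n = 1 + n • N := by
  induction n with
  | zero => simp
  | succ n ih =>
    rw [pow_succ, ih, add_mul, one_mul, mul_add, mul_one, smul_mul_assoc, hN, smul_zero, add_zero,
      succ_nsmul', add_assoc]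

namespace Matrix

variable {R : Type*} [CommRing R] {A B : Matrix (Fin 2) (Fin 2) R}

theorem mul_self_eq_trace_smul_sub_det_smul_one (A : Matrix (Fin 2) (Fin 2) R) :
    A * A = A.trace • A - A.det • 1 := by
  ext i j
  fin_cases i <;> fin_cases j <;>
    simp [mul_apply, trace_fin_two, det_fin_two] <;> ring

theorem trace_pow_add_two_of_det_eq_one (hA : A.det = 1) (n : ℕ) :
    (A ^ (n + 2)).trace = A.trace * (A ^ (n + 1)).trace - (A ^ n).trace := by
  rw [pow_add, sq, mul_self_eq_trace_smul_sub_det_smul_one, hA, one_smul, mul_sub,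
    mul_smul_comm, mul_one, ← pow_succ, trace_sub, trace_smul, smul_eq_mul]

theorem sub_one_mul_self_eq_zero_of_trace_eq_two (hA : A.det = 1) (ht : A.trace = 2) :
    (A - 1) * (A - 1) = 0 := by
  have h := A.mul_self_eq_trace_smul_sub_det_smul_one
  rw [hA, ht, one_smul, two_smul] at h
  rw [sub_mul, mul_sub, mul_sub, h]
  simp only [mul_one, one_mul]
  abel

theorem trace_mul_mul_adjugate_mul_adjugate (hA : A.det = 1) (hB : B.det = 1) :
    (A * B * adjugate A * adjugate B).trace =
      A.trace ^ 2 + B.trace ^ 2 + (A * B).trace ^ 2 - A.trace * B.trace * (A * B).trace - 2 := by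
  rw [det_fin_two] at hA hB
  simp only [adjugate_fin_two, trace_fin_two, mul_apply, Fin.sum_univ_two, of_apply, cons_val',
    cons_val_fin_one, cons_val_zero, cons_val_one, mul_neg]
  linear_combination (-2 + B 1 1 ^ 2 + 2 * B 0 0 * B 1 1 + B 0 0 ^ 2) * hA +
    (A 1 1 ^ 2 + 2 * A 0 1 * A 1 0 + A 0 0 ^ 2) * hB

theorem pow_ne_one_of_trace_eq_two [IsAddTorsionFree R] (hA : A.det = 1) (ht : A.trace = 2)
    (h1 : A ≠ 1) {n : ℕ} (hn : n ≠ 0) : A ^ n ≠ 1 := by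
  have hpow := one_add_pow_of_mul_self_eq_zero (sub_one_mul_self_eq_zero_of_trace_eq_two hA ht) n
  rw [add_sub_cancel] at hpow
  rw [hpow, Ne, add_eq_left]
  -- `Matrix` carries no `IsAddTorsionFree` instance; its underlying function type does.
  exact mt (nsmul_eq_zero_iff_right (M := Fin 2 → Fin 2 → R) hn).1 (sub_eq_zero.not.2 h1)

section LinearOrder

variable [LinearOrder R] [IsStrictOrderedRing R]

theorem abs_trace_pow_lt_abs_trace_pow_succ (hA : A.det = 1) (ht : 2 < |A.trace|) (n : ℕ) :
    |(A ^ n).trace| < |(A ^ (n + 1)).trace| := by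
  induction n with
  | zero => simpa using ht
  | succ n ih =>
    rw [trace_pow_add_two_of_det_eq_one hA]
    calc |(A ^ (n + 1)).trace|
        < |A.trace| * |(A ^ (n + 1)).trace| - |(A ^ n).trace| := by
          nlinarith [abs_nonneg (A ^ (n + 1)).trace]
      _ ≤ |A.trace * (A ^ (n + 1)).trace - (A ^ n).trace| := by
          rw [← abs_mul]; exact abs_sub_abs_le_abs_sub _ _

theorem pow_ne_one_of_two_lt_abs_trace (hA : A.det = 1) (ht : 2 < |A.trace|) {n : ℕ}
    (hn : n ≠ 0) : A ^ n ≠ 1 := by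
  have hmono := strictMono_nat_of_lt_succ (abs_trace_pow_lt_abs_trace_pow_succ hA ht)
  exact fun h ↦ (hmono (Nat.pos_of_ne_zero hn)).ne (by simp only [pow_zero, h])

end LinearOrder

end Matrix

open scoped MatrixGroups commutatorElement

namespace Matrix.SpecialLinearGroup

variable {R : Type*} [CommRing R]

local notation:1024 "↑ₘ" A:1024 => ((A : SL(2, R)) : Matrix (Fin 2) (Fin 2) R)

theorem trace_commutatorElement (g h : SL(2, R)) :
    trace ↑ₘ⁅g, h⁆ = trace ↑ₘg ^ 2 + trace ↑ₘh ^ 2 + trace ↑ₘ(g * h) ^ 2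
      - trace ↑ₘg * trace ↑ₘh * trace ↑ₘ(g * h) - 2 := by
  rw [commutatorElement_def, coe_mul, coe_mul, coe_mul, coe_inv, coe_inv]
  exact trace_mul_mul_adjugate_mul_adjugate g.2 h.2

theorem not_isOfFinOrder_of_forall_pow_ne_one {g : SL(2, R)} (hg : ∀ n ≠ 0, ↑ₘg ^ n ≠ 1) :
    ¬ IsOfFinOrder g := by
  rw [isOfFinOrder_iff_pow_eq_one]
  rintro ⟨n, hn, hpow⟩
  exact hg n hn.ne' (by rw [← coe_pow, hpow, coe_one])

theorem not_isOfFinOrder_of_trace_eq_two [IsAddTorsionFree R] {g : SL(2, R)}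
    (ht : trace ↑ₘg = 2) (hg : g ≠ 1) : ¬ IsOfFinOrder g :=
  not_isOfFinOrder_of_forall_pow_ne_one fun _ hn ↦
    pow_ne_one_of_trace_eq_two g.2 ht (fun h ↦ hg (Subtype.ext h)) hn

theorem not_isOfFinOrder_of_trace_eq_neg_two [IsAddTorsionFree R] {g : SL(2, R)}
    (ht : trace ↑ₘg = -2) (hg : g ≠ -1) : ¬ IsOfFinOrder g := by
  have hneg : ¬ IsOfFinOrder (-g) :=
    not_isOfFinOrder_of_trace_eq_two (by rw [coe_neg, trace_neg, ht, neg_neg])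
      (fun h ↦ hg (by rw [← h, neg_neg]))
  intro hfin
  have hsq : IsOfFinOrder ((-g) ^ 2) := by rw [neg_sq]; exact hfin.pow
  exact hneg (hsq.of_pow two_ne_zero)

section LinearOrder

variable [LinearOrder R] [IsStrictOrderedRing R]

theorem not_isOfFinOrder_of_two_lt_abs_trace {g : SL(2, R)} (ht : 2 < |trace ↑ₘg|) :
    ¬ IsOfFinOrder g :=
  not_isOfFinOrder_of_forall_pow_ne_one fun _ ↦ pow_ne_one_of_two_lt_abs_trace g.2 ht

theorem not_isOfFinOrder_of_two_le_abs_trace {g : SL(2, R)} (ht : 2 ≤ |trace ↑ₘg|)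
    (hg₁ : g ≠ 1) (hg₂ : g ≠ -1) : ¬ IsOfFinOrder g := by
  rcases ht.lt_or_eq with ht | ht
  · exact not_isOfFinOrder_of_two_lt_abs_trace ht
  rcases (abs_eq (zero_le_two (α := R))).1 ht.symm with ht | ht
  · exact not_isOfFinOrder_of_trace_eq_two ht hg₁
  · exact not_isOfFinOrder_of_trace_eq_neg_two ht hg₂

theorem two_lt_trace_commutatorElement {g h : SL(2, R)} (hg : 2 < |trace ↑ₘg|)
    (hh : |trace ↑ₘh| < 2) : 2 < trace ↑ₘ⁅g, h⁆ := by
  rw [trace_commutatorElement]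
  set t := trace ↑ₘg
  set s := trace ↑ₘh
  set u := trace ↑ₘ(g * h)
  have ht : 4 < t ^ 2 := by nlinarith [sq_abs t, abs_nonneg t]
  have hs : s ^ 2 < 4 := by nlinarith [sq_abs s, abs_nonneg s]
  nlinarith [sq_nonneg (2 * u - t * s), mul_pos (sub_pos.2 ht) (sub_pos.2 hs)]

end LinearOrder

end Matrix.SpecialLinearGroup

/-- Let `G` be a subgroup of `SL(2, ℝ)` containing a hyperbolic element `γ`
(i.e. `|trace γ| > 2`). Then for every `x ∈ G` with `x ≠ I` and `x ≠ -I`, the normal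
closure of `x` in `G` contains an element of infinite order (hence an infinite cyclic
subgroup). -/
theorem normalClosure_contains_infinite_order
    (G : Subgroup (Matrix.SpecialLinearGroup (Fin 2) ℝ))
    (γ : ↥G)
    (hγ : 2 < |Matrix.trace ((γ : Matrix.SpecialLinearGroup (Fin 2) ℝ) :
      Matrix (Fin 2) (Fin 2) ℝ)|)
    (x : ↥G)
    (hx1 : ((x : Matrix.SpecialLinearGroup (Fin 2) ℝ) : Matrix (Fin 2) (Fin 2) ℝ) ≠ 1)
    (hxneg1 : ((x : Matrix.SpecialLinearGroup (Fin 2) ℝ) : Matrix (Fin 2) (Fin 2) ℝ) ≠ -1) :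
    ∃ y ∈ Subgroup.normalClosure ({x} : Set ↥G), ¬ IsOfFinOrder y := by
  have hx : x ∈ Subgroup.normalClosure ({x} : Set ↥G) := Subgroup.subset_normalClosure rfl
  have of_coe : ∀ y : ↥G, ¬ IsOfFinOrder (y : SL(2, ℝ)) → ¬ IsOfFinOrder y :=
    fun _ ↦ mt G.subtype.isOfFinOrder
  by_cases hxt : 2 ≤ |trace ((x : SL(2, ℝ)) : Matrix (Fin 2) (Fin 2) ℝ)|
  · refine ⟨x, hx, of_coe x ?_⟩
    refine SpecialLinearGroup.not_isOfFinOrder_of_two_le_abs_trace hxt ?_ ?_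
    · exact fun h ↦ hx1 (by simp [h])
    · exact fun h ↦ hxneg1 (by simp [h])
  · refine ⟨⁅γ, x⁆, ?_, of_coe _ <| SpecialLinearGroup.not_isOfFinOrder_of_two_lt_abs_trace ?_⟩
    · rw [commutatorElement_def]
      exact mul_mem (Subgroup.normalClosure_normal.conj_mem x hx γ) (inv_mem hx)
    · exact (SpecialLinearGroup.two_lt_trace_commutatorElement hγ (not_le.1 hxt)).trans_le
        (le_abs_self _)
end
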